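/- arXiv:1908.04254 — 9 statements merged into one kernel-verified Lean document; each statement's English description precedes it below -/
import Mathlib

section
/- For integers a, b, c with c ≥ a ≥ 0 and b ≥ 0, the sum over w from 0 to a of (binomial(a+b+w, w) * binomial(c-w, a-w)) equals binomial(1+a+b+c, a). -/
/-!
After the substitution `c = a + d`, the summand is `C(a+b+w, a+b) * C(d+(a-w), d)`, the product of
the coefficients of `X^w` in `(1 - X)^-(a+b+1)` and of `X^(a-w)` in `(1 - X)^-(d+1)`. So the sum is
the coefficient of `X^a` in `(1 - X)^-(a+b+d+2)`, which is `C(2a+b+d+1, a)`.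
-/

open Finset PowerSeries

theorem Nat.sum_antidiagonal_add_choose_mul_add_choose (a b n : ℕ) :
    ∑ ij ∈ antidiagonal n, (a + ij.1).choose a * (b + ij.2).choose b =
      (a + b + 1 + n).choose (a + b + 1) := by
  have h := congrArg (fun f : ℤ⟦X⟧ˣ => coeff n f.val) (invOneSubPow_add ℤ (a + 1) (b + 1))
  simp only [Units.val_mul, coeff_mul, invOneSubPow_val_succ_eq_mk_add_choose, coeff_mk,
    show a + 1 + (b + 1) = a + b + 1 + 1 by ring] at h
  exact_mod_cast h.symm

theorem stmt_0 (a b c : ℕ) (hac : a ≤ c) :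
    ∑ w ∈ Finset.range (a + 1),
      Nat.choose (a + b + w) w * Nat.choose (c - w) (a - w)
      = Nat.choose (1 + a + b + c) a := by
  obtain ⟨d, rfl⟩ := Nat.exists_eq_add_of_le hac
  calc ∑ w ∈ range (a + 1), (a + b + w).choose w * (a + d - w).choose (a - w)
      = ∑ w ∈ range (a + 1), (a + b + w).choose (a + b) * (d + (a - w)).choose d := by
        refine sum_congr rfl fun w hw => ?_
        have hwa : w ≤ a := Nat.lt_succ_iff.mp (mem_range.mp hw)
        rw [Nat.choose_symm_add, show a + d - w = d + (a - w) by omega, Nat.choose_symm_add]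
    _ = (a + b + d + 1 + a).choose (a + b + d + 1) := by
        rw [← Nat.sum_antidiagonal_add_choose_mul_add_choose,
          Nat.sum_antidiagonal_eq_sum_range_succ
            (fun i j => (a + b + i).choose (a + b) * (d + j).choose d)]
    _ = (1 + a + b + (a + d)).choose a := by
        rw [Nat.choose_symm_add]
        congr 1
        ring
end

section
/- For integers a, b, c with c ≥ a ≥ 1 and b ≥ 0, the sum over w from 0 to a of (w * binomial(a+b+w, w) * binomial(c-w, a-w)) equals binomial(1+a+b+c, a) * a * (1+a+b) / (2+b+c). -/
/-!
Absorption, `w * C(m + w, w) = (m + 1) * C(m + 1 + (w - 1), w - 1)`, turns the weighted sum into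
the convolution `∑_{w ≤ a} C(m + w, w) * C(c - w, a - w) = C(m + c + 1, a)` with `m` raised by one.
The convolution follows from Pascal's rule in `c` (the edge case `a = c` being the hockey-stick
identity), and one more absorption on the right-hand side converts `C(_, a - 1)` into `C(_, a)`.
-/

open Finset

namespace Nat

theorem sum_range_add_choose' (m n : ℕ) :
    ∑ w ∈ range (n + 1), (m + w).choose w = (m + n + 1).choose n := by
  induction n with
  | zero => simp
  | succ n ih => rw [sum_range_succ, ih]; exact (choose_succ_succ' (m + n + 1) n).symm

theorem sum_add_choose_mul_choose_sub (m : ℕ) {a c : ℕ} (hac : a ≤ c) :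
    ∑ w ∈ range (a + 1), (m + w).choose w * (c - w).choose (a - w) = (m + c + 1).choose a := by
  induction c generalizing a with
  | zero =>
    obtain rfl : a = 0 := by omega
    simp
  | succ c ih =>
    obtain rfl | hlt := hac.eq_or_lt
    · simp only [choose_self, mul_one]
      exact sum_range_add_choose' m (c + 1)
    obtain _ | a := a
    · simp
    have pascal : ∀ w ∈ range (a + 1), (m + w).choose w * (c + 1 - w).choose (a + 1 - w)
        = (m + w).choose w * (c - w).choose (a - w)
          + (m + w).choose w * (c - w).choose (a + 1 - w) := by
      intro w hw
      have hw : w ≤ a := mem_range_succ_iff.mp hw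
      rw [show c + 1 - w = c - w + 1 by omega, show a + 1 - w = a - w + 1 by omega,
        choose_succ_succ', mul_add]
    -- The term `w = a + 1` is kept out of `pascal`: there `(c - w).choose (a - w)` is `1`, not `0`.
    calc ∑ w ∈ range (a + 1 + 1), (m + w).choose w * (c + 1 - w).choose (a + 1 - w)
        = ∑ w ∈ range (a + 1), (m + w).choose w * (c - w).choose (a - w)
          + ∑ w ∈ range (a + 1 + 1), (m + w).choose w * (c - w).choose (a + 1 - w) := by
          rw [sum_range_succ, sum_range_succ _ (a + 1), sum_congr rfl pascal, sum_add_distrib]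
          simp only [Nat.sub_self, choose_zero_right, mul_one, add_assoc]
      _ = (m + (c + 1) + 1).choose (a + 1) := by
          rw [ih (by omega), ih (by omega), ← choose_succ_succ']
          rfl

theorem add_one_mul_choose_add_one (m w : ℕ) :
    (w + 1) * (m + (w + 1)).choose (w + 1) = (m + 1) * (m + 1 + w).choose w := by
  have h := choose_succ_right_eq (m + 1 + w) w
  rw [show m + 1 + w - w = m + 1 by omega] at h
  rw [show m + (w + 1) = m + 1 + w by ring, mul_comm, h, mul_comm]

theorem sum_mul_add_choose_mul_choose_sub (m : ℕ) {a c : ℕ} (hac : a ≤ c) :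
    ∑ w ∈ range (a + 1 + 1), w * (m + w).choose w * (c + 1 - w).choose (a + 1 - w)
      = (m + 1) * (m + c + 2).choose a := by
  rw [sum_range_succ', show m + c + 2 = m + 1 + c + 1 by ring,
    ← sum_add_choose_mul_choose_sub (m + 1) hac, mul_sum]
  simp only [zero_mul, add_zero, add_one_mul_choose_add_one, mul_assoc]
  refine sum_congr rfl fun w _ => ?_
  congr 3 <;> omega

end Nat

theorem stmt_1_general (a b c : ℕ) (hac : a ≤ c) :
    ∑ w ∈ Finset.range (a + 1),
      ((w : ℚ) * (Nat.choose (a + b + w) w : ℚ) * (Nat.choose (c - w) (a - w) : ℚ))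
      = (Nat.choose (1 + a + b + c) a : ℚ) * a * (1 + a + b) / (2 + b + c) := by
  obtain _ | a := a
  · simp
  obtain _ | c := c
  · omega
  have hsum := Nat.sum_mul_add_choose_mul_choose_sub (a + 1 + b) (Nat.le_of_succ_le_succ hac)
  have habs := Nat.choose_succ_right_eq (a + b + c + 3) a
  rw [show a + 1 + b + c + 2 = a + b + c + 3 by ring] at hsum
  rw [show a + b + c + 3 - a = b + c + 3 by omega] at habs
  rw [show 1 + (a + 1) + b + (c + 1) = a + b + c + 3 by ring, eq_div_iff (by positivity)]
  have hsumQ := congrArg (Nat.cast : ℕ → ℚ) hsum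
  have habsQ := congrArg (Nat.cast : ℕ → ℚ) habs
  push_cast at hsumQ habsQ ⊢
  rw [hsumQ]
  linear_combination (-((a : ℚ) + b + 2)) * habsQ

theorem stmt_1 (a b c : ℕ) (ha : 1 ≤ a) (hac : a ≤ c) :
    ∑ w ∈ Finset.range (a + 1),
      ((w : ℚ) * (Nat.choose (a + b + w) w : ℚ) * (Nat.choose (c - w) (a - w) : ℚ))
      = (Nat.choose (1 + a + b + c) a : ℚ) * a * (1 + a + b) / (2 + b + c) :=
  stmt_1_general a b c hac
end

section
/- Let j ≥ 1/2 be a half-integer, d = 2j+1, and let p : {0,1,...,2j} → [0,1] be a probability distribution (∑_L p_L = 1). Define u := (d²·∑_L p_L²/(2L+1) − 1)/(d²−1) and Δ := (∑_L p_L·L(L+1))²/(8j(j+1)²). Then √Δ ≤ (3√2·j^{3/2}/(2j+1))·(1−u). -/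
/-! Both sides are controlled by `B = 1 - ∑ p_L² / (2L + 1)`: the identity
`1 - u = (2j+1)² B / (4j(j+1))` holds by algebra, and `∑ p_L L(L+1) ≤ 3j(2j+1) B` holds termwise
because `p_L² ≤ p_L` and `(L+1)(2L+1) ≤ 6j(2j+1)` for `L ≤ 2j`. Squaring then produces
exactly the constant `3√2 j^{3/2} / (2j+1)`. -/

open Finset

lemma mul_casimir_le {j c x : ℝ} (hj : 1 / 2 ≤ j) (hc0 : 0 ≤ c) (hcj : c ≤ 2 * j)
    (hx0 : 0 ≤ x) (hx1 : x ≤ 1) :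
    x * (c * (c + 1)) ≤ 3 * j * (2 * j + 1) * (x - x ^ 2 / (2 * c + 1)) := by
  have hden : 0 < 2 * c + 1 := by linarith
  have hcasimir : (c + 1) * (2 * c + 1) ≤ 6 * j * (2 * j + 1) := by nlinarith
  rw [sub_div' hden.ne', mul_div_assoc', le_div_iff₀ hden]
  nlinarith [mul_nonneg (mul_nonneg hx0 hc0) (sub_nonneg.2 hcasimir),
    mul_nonneg (mul_nonneg (by positivity : (0 : ℝ) ≤ 3 * j * (2 * j + 1)) hx0) (sub_nonneg.2 hx1)]

lemma sum_mul_casimir_le {s : Finset ℕ} {p : ℕ → ℝ} {j : ℝ} (hj : 1 / 2 ≤ j)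
    (hs : ∀ L ∈ s, (L : ℝ) ≤ 2 * j) (hp0 : ∀ L ∈ s, 0 ≤ p L) (hp1 : ∀ L ∈ s, p L ≤ 1)
    (hsum : ∑ L ∈ s, p L = 1) :
    ∑ L ∈ s, p L * (L * (L + 1)) ≤ 3 * j * (2 * j + 1) * (1 - ∑ L ∈ s, p L ^ 2 / (2 * L + 1)) := by
  rw [show 1 - ∑ L ∈ s, p L ^ 2 / (2 * L + 1) = ∑ L ∈ s, (p L - p L ^ 2 / (2 * L + 1)) by
    rw [sum_sub_distrib, hsum], mul_sum]
  exact sum_le_sum fun L hL => mul_casimir_le hj L.cast_nonneg (hs L hL) (hp0 L hL) (hp1 L hL)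

lemma one_sub_unitarity {j : ℝ} (hj : 0 < j) (S : ℝ) :
    1 - ((2 * j + 1) ^ 2 * S - 1) / ((2 * j + 1) ^ 2 - 1) =
      (2 * j + 1) ^ 2 * (1 - S) / (4 * j * (j + 1)) := by
  rw [show (2 * j + 1) ^ 2 - 1 = 4 * j * (j + 1) by ring]
  field_simp
  ring

lemma sqrt_sq_div_le_of_le_mul {j A B : ℝ} (hj : 0 < j) (hA : 0 ≤ A)
    (hAB : A ≤ 3 * j * (2 * j + 1) * B) :
    √(A ^ 2 / (8 * j * (j + 1) ^ 2)) ≤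
      3 * √2 * j ^ ((3 : ℝ) / 2) / (2 * j + 1) * ((2 * j + 1) ^ 2 * B / (4 * j * (j + 1))) := by
  have hB : 0 ≤ B := nonneg_of_mul_nonneg_right (hA.trans hAB) (by positivity)
  have hj32 : (j ^ ((3 : ℝ) / 2)) ^ 2 = j ^ 3 := by
    rw [← Real.rpow_mul_natCast hj.le]; norm_num
  rw [Real.sqrt_le_left (by positivity), mul_pow, div_pow, mul_pow, mul_pow, hj32,
    Real.sq_sqrt zero_le_two]
  calc A ^ 2 / (8 * j * (j + 1) ^ 2)
      ≤ (3 * j * (2 * j + 1) * B) ^ 2 / (8 * j * (j + 1) ^ 2) := by gcongr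
    _ = _ := by field_simp; ring

theorem stmt_3 (n : ℕ) (hn : 1 ≤ n) (j : ℝ) (hj : j = n / 2)
    (p : ℕ → ℝ) (hp0 : ∀ L, 0 ≤ p L) (hp1 : ∀ L, p L ≤ 1)
    (hsum : ∑ L ∈ Finset.range (n + 1), p L = 1)
    (d : ℝ) (hd : d = 2 * j + 1)
    (u : ℝ) (hu : u = (d ^ 2 * ∑ L ∈ Finset.range (n + 1), p L ^ 2 / (2 * L + 1) - 1) / (d ^ 2 - 1))
    (Δ : ℝ) (hΔ : Δ = (∑ L ∈ Finset.range (n + 1), p L * (L * (L + 1))) ^ 2 / (8 * j * (j + 1) ^ 2)) :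
    Real.sqrt Δ ≤ (3 * Real.sqrt 2 * j ^ ((3 : ℝ) / 2)) / (2 * j + 1) * (1 - u) := by
  have hj2 : 1 / 2 ≤ j := by
    rw [hj]; gcongr; exact_mod_cast hn
  have hL : ∀ L ∈ range (n + 1), (L : ℝ) ≤ 2 * j := fun L hL => by
    rw [hj, mul_div_cancel₀ _ two_ne_zero]; exact_mod_cast mem_range_succ_iff.1 hL
  subst hd hu hΔ
  rw [one_sub_unitarity (by linarith)]
  exact sqrt_sq_div_le_of_le_mul (by linarith)
    (sum_nonneg fun L _ => by have := hp0 L; positivity)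
    (sum_mul_casimir_le hj2 hL (fun L _ => hp0 L) (fun L _ => hp1 L) hsum)
end

section
/- Let j ≥ 1/2 be a half-integer, d = 2j+1, and let p : {0,1,...,2j} → [0,1] be a probability distribution (∑_L p_L = 1). Define u := (d²·∑_L p_L²/(2L+1) − 1)/(d²−1) and Δ := (∑_L p_L·L(L+1))²/(8j(j+1)²). Then √Δ ≥ (√2·j^{1/2}/(2j+1)²)·(1−u). -/
open Finset

/-!
Write `Q = ∑ p_L² / (2L+1)` and `S = ∑ p_L L(L+1)`. With `d² - 1 = 4j(j+1)` one has
`1 - u = d² (1 - Q) / (4j(j+1))`, so both sides of the inequality are the quantities `S` and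
`1 - Q` divided by the same constant `2(j+1)√(2j)`. It remains to see `1 - Q ≤ S`:
`Q ≥ p₀²`, and since `L(L+1) ≥ 2` for `L ≥ 1`, `S ≥ 2(1 - p₀) ≥ 1 - p₀²`.
-/

lemma two_mul_sum_sub_le_sum_mul_mul_succ (n : ℕ) (p : ℕ → ℝ) (hp : ∀ L, 0 ≤ p L) :
    2 * (∑ L ∈ range (n + 1), p L - p 0) ≤ ∑ L ∈ range (n + 1), p L * (L * (L + 1)) := by
  rw [sum_range_succ', sum_range_succ', add_sub_cancel_right, mul_sum]
  simp only [Nat.cast_zero, zero_mul, mul_zero, add_zero]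
  refine sum_le_sum fun L _ ↦ ?_
  have hcasimir : (2 : ℝ) ≤ (L + 1 : ℕ) * ((L + 1 : ℕ) + 1) := by
    push_cast; nlinarith [L.cast_nonneg (α := ℝ)]
  nlinarith [hp (L + 1)]

lemma one_sub_sum_sq_div_le_sum_mul_mul_succ (n : ℕ) (p : ℕ → ℝ) (hp : ∀ L, 0 ≤ p L)
    (hsum : ∑ L ∈ range (n + 1), p L = 1) :
    1 - ∑ L ∈ range (n + 1), p L ^ 2 / (2 * L + 1) ≤ ∑ L ∈ range (n + 1), p L * (L * (L + 1)) := by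
  have hQ : p 0 ^ 2 ≤ ∑ L ∈ range (n + 1), p L ^ 2 / (2 * L + 1) := by
    have := single_le_sum (f := fun L : ℕ ↦ p L ^ 2 / (2 * (L : ℝ) + 1))
      (fun L _ ↦ by positivity) (mem_range.mpr n.succ_pos)
    simpa only [Nat.cast_zero, mul_zero, zero_add, div_one] using this
  have hS := two_mul_sum_sub_le_sum_mul_mul_succ n p hp
  rw [hsum] at hS
  nlinarith [sq_nonneg (1 - p 0)]

lemma sqrt_sq_div_eight_mul (S j : ℝ) (hS : 0 ≤ S) (hj : 0 ≤ j) :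
    √(S ^ 2 / (8 * j * (j + 1) ^ 2)) = S / (2 * (j + 1) * (√2 * √j)) := by
  have hc : 8 * j * (j + 1) ^ 2 = (2 * (j + 1) * (√2 * √j)) ^ 2 := by
    rw [mul_pow, mul_pow, mul_pow, Real.sq_sqrt zero_le_two, Real.sq_sqrt hj]; ring
  rw [hc, ← div_pow, Real.sqrt_sq (by positivity)]

lemma mul_one_sub_unitarity_eq (j Q : ℝ) (hj : 0 < j) :
    √2 * √j / (2 * j + 1) ^ 2 * (1 - ((2 * j + 1) ^ 2 * Q - 1) / ((2 * j + 1) ^ 2 - 1))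
      = (1 - Q) / (2 * (j + 1) * (√2 * √j)) := by
  have hden : (2 * j + 1) ^ 2 - 1 = 4 * j * (j + 1) := by ring
  have hsqrt : 0 < √j := Real.sqrt_pos.mpr hj
  rw [hden]
  field_simp
  rw [Real.sq_sqrt zero_le_two, Real.sq_sqrt hj.le]
  ring

theorem stmt_4_general (n : ℕ) (hn : 1 ≤ n) (j : ℝ) (hj : j = n / 2)
    (p : ℕ → ℝ) (hp0 : ∀ L, 0 ≤ p L)
    (hsum : ∑ L ∈ Finset.range (n + 1), p L = 1)
    (d : ℝ) (hd : d = 2 * j + 1)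
    (u : ℝ) (hu : u = (d ^ 2 * ∑ L ∈ Finset.range (n + 1), p L ^ 2 / (2 * L + 1) - 1) / (d ^ 2 - 1))
    (Δ : ℝ) (hΔ : Δ = (∑ L ∈ Finset.range (n + 1), p L * (L * (L + 1))) ^ 2 / (8 * j * (j + 1) ^ 2)) :
    Real.sqrt Δ ≥ (Real.sqrt 2 * Real.sqrt j) / (2 * j + 1) ^ 2 * (1 - u) := by
  have hj0 : 0 < j := by
    have hn' : (1 : ℝ) ≤ n := by exact_mod_cast hn
    rw [hj]; linarith
  have hS0 : 0 ≤ ∑ L ∈ range (n + 1), p L * (L * (L + 1)) :=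
    sum_nonneg fun L _ ↦ mul_nonneg (hp0 L) (by positivity)
  rw [hΔ, sqrt_sq_div_eight_mul _ j hS0 hj0.le, hu, hd, mul_one_sub_unitarity_eq j _ hj0]
  exact div_le_div_of_nonneg_right (one_sub_sum_sq_div_le_sum_mul_mul_succ n p hp0 hsum)
    (by positivity)

theorem stmt_4 (n : ℕ) (hn : 1 ≤ n) (j : ℝ) (hj : j = n / 2)
    (p : ℕ → ℝ) (hp0 : ∀ L, 0 ≤ p L) (hp1 : ∀ L, p L ≤ 1)
    (hsum : ∑ L ∈ Finset.range (n + 1), p L = 1)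
    (d : ℝ) (hd : d = 2 * j + 1)
    (u : ℝ) (hu : u = (d ^ 2 * ∑ L ∈ Finset.range (n + 1), p L ^ 2 / (2 * L + 1) - 1) / (d ^ 2 - 1))
    (Δ : ℝ) (hΔ : Δ = (∑ L ∈ Finset.range (n + 1), p L * (L * (L + 1))) ^ 2 / (8 * j * (j + 1) ^ 2)) :
    Real.sqrt Δ ≥ (Real.sqrt 2 * Real.sqrt j) / (2 * j + 1) ^ 2 * (1 - u) :=
  stmt_4_general n hn j hj p hp0 hsum d hd u hu Δ hΔ
end

section
/- Let p : {0,...,2j} → [0,1] be a probability distribution and set d = 2j+1. Then (d²·∑_{L=0}^{2j} p_L²/(2L+1) − 1)/(d²−1) ≤ 1 − (2/3)·(d²/(d²−1))·(1−p₀)(1+2p₀). -/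
/-! Split off the trivial component `L = 0`. Every other weight has denominator `2L + 1 ≥ 3`, and
for nonnegative weights the sum of squares is at most the square of the sum, which is `(1 - p₀)²`.
Hence `∑ p_L² / (2L + 1) ≤ p₀² + (1 - p₀)² / 3 = 1 - (2/3)(1 - p₀)(1 + 2p₀)`, and the bound on the
unitarity is this inequality transported through the increasing affine map `S ↦ (d² S - 1)/(d² - 1)`. -/

open Finset

lemma sum_sq_div_two_mul_add_one_le (n : ℕ) {p : ℕ → ℝ} (hp : ∀ L, 0 ≤ p L) :
    ∑ L ∈ range (n + 1), p L ^ 2 / (2 * L + 1)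
      ≤ p 0 ^ 2 + (∑ L ∈ range n, p (L + 1)) ^ 2 / 3 := by
  rw [sum_range_succ']
  have hterm : ∀ L ∈ range n, p (L + 1) ^ 2 / (2 * ((L + 1 : ℕ) : ℝ) + 1) ≤ p (L + 1) ^ 2 / 3 :=
    fun L _ ↦ div_le_div_of_nonneg_left (sq_nonneg _) (by norm_num) (by
      push_cast; linarith [L.cast_nonneg (α := ℝ)])
  have htail : ∑ L ∈ range n, p (L + 1) ^ 2 / 3 ≤ (∑ L ∈ range n, p (L + 1)) ^ 2 / 3 := by
    rw [← sum_div]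
    gcongr
    exact sum_sq_le_sq_sum_of_nonneg fun L _ ↦ hp (L + 1)
  simp only [Nat.cast_zero, mul_zero, zero_add, div_one]
  linarith [sum_le_sum hterm]

lemma div_sub_one_le_one_sub_mul_div {D S t : ℝ} (hD : 1 < D) (hS : S ≤ 1 - t) :
    (D * S - 1) / (D - 1) ≤ 1 - t * (D / (D - 1)) := by
  have hD1 : 0 < D - 1 := sub_pos.mpr hD
  rw [div_le_iff₀ hD1, sub_mul, mul_assoc, div_mul_cancel₀ _ hD1.ne']
  nlinarith

theorem stmt_6_general (n : ℕ) (hn : 1 ≤ n) (d : ℝ) (hd : d = n + 1)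
    (p : ℕ → ℝ) (hp0 : ∀ L, 0 ≤ p L)
    (hsum : ∑ L ∈ Finset.range (n + 1), p L = 1) :
    (d ^ 2 * ∑ L ∈ Finset.range (n + 1), p L ^ 2 / (2 * L + 1) - 1) / (d ^ 2 - 1)
      ≤ 1 - (2 / 3) * (d ^ 2 / (d ^ 2 - 1)) * (1 - p 0) * (1 + 2 * p 0) := by
  have hrest : ∑ L ∈ range n, p (L + 1) = 1 - p 0 := by
    rw [sum_range_succ'] at hsum
    linarith
  have hS : ∑ L ∈ range (n + 1), p L ^ 2 / (2 * L + 1)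
      ≤ 1 - 2 / 3 * (1 - p 0) * (1 + 2 * p 0) := by
    have h := sum_sq_div_two_mul_add_one_le n hp0
    rw [hrest] at h
    linarith
  have hd2 : 1 < d ^ 2 := by
    have : (1 : ℝ) ≤ n := by exact_mod_cast hn
    nlinarith
  calc _ ≤ 1 - 2 / 3 * (1 - p 0) * (1 + 2 * p 0) * (d ^ 2 / (d ^ 2 - 1)) :=
        div_sub_one_le_one_sub_mul_div hd2 hS
    _ = _ := by ring

theorem stmt_6 (n : ℕ) (hn : 1 ≤ n) (d : ℝ) (hd : d = n + 1)
    (p : ℕ → ℝ) (hp0 : ∀ L, 0 ≤ p L) (hp1 : ∀ L, p L ≤ 1)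
    (hsum : ∑ L ∈ Finset.range (n + 1), p L = 1) :
    (d ^ 2 * ∑ L ∈ Finset.range (n + 1), p L ^ 2 / (2 * L + 1) - 1) / (d ^ 2 - 1)
      ≤ 1 - (2 / 3) * (d ^ 2 / (d ^ 2 - 1)) * (1 - p 0) * (1 + 2 * p 0) :=
  stmt_6_general n hn d hd p hp0 hsum
end

section
/- For half-integers j_A, j_B > 0, the maximum over L ∈ {|j_A−j_B|, |j_A−j_B|+1, ..., j_A+j_B} of κ(L) := (j_A(j_A+1) + j_B(j_B+1) − L(L+1))/(2j_A(j_A+1)) is attained at L = |j_A−j_B| and equals j_B/j_A when j_A ≥ j_B, and (j_B+1)/(j_A+1) when j_A < j_B. -/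
/-- The factor `κ(L)` of the paper, with `jA`, `jB` the two spins. -/
noncomputable def polarisationFactor (jA jB L : ℝ) : ℝ :=
  (jA * (jA + 1) + jB * (jB + 1) - L * (L + 1)) / (2 * jA * (jA + 1))

section polarisationFactor

variable {jA : ℝ} (hjA : 0 < jA) (jB : ℝ)
include hjA

theorem polarisationFactor_antitoneOn : AntitoneOn (polarisationFactor jA jB) (Set.Ici 0) := by
  intro L hL L' _ hLL'
  have hL : 0 ≤ L := hL
  apply div_le_div_of_nonneg_right _ (by positivity)
  nlinarith

theorem polarisationFactor_sub_of_le : polarisationFactor jA jB (jA - jB) = jB / jA := by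
  unfold polarisationFactor
  field_simp
  ring

theorem polarisationFactor_sub_rev : polarisationFactor jA jB (jB - jA) = (jB + 1) / (jA + 1) := by
  unfold polarisationFactor
  field_simp
  ring

end polarisationFactor

theorem stmt_8_general (a b : ℕ) (ha : 0 < a)
    (jA jB : ℝ) (hjA : jA = a / 2)
    (κ : ℝ → ℝ)
    (hκ : ∀ L : ℝ, κ L = (jA * (jA + 1) + jB * (jB + 1) - L * (L + 1)) / (2 * jA * (jA + 1))) :
    (∀ k : ℕ, k ≤ min a b → κ (|jA - jB| + k) ≤ κ |jA - jB|) ∧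
    (jA ≥ jB → κ |jA - jB| = jB / jA) ∧
    (jA < jB → κ |jA - jB| = (jB + 1) / (jA + 1)) := by
  have hjA0 : 0 < jA := by rw [hjA]; positivity
  obtain rfl : κ = polarisationFactor jA jB := funext hκ
  refine ⟨fun k _ => ?_, fun h => ?_, fun h => ?_⟩
  · have h0 : (0 : ℝ) ≤ |jA - jB| := abs_nonneg _
    exact polarisationFactor_antitoneOn hjA0 jB h0 (by simp only [Set.mem_Ici]; positivity)
      (le_add_of_nonneg_right k.cast_nonneg)
  · rw [abs_of_nonneg (sub_nonneg.mpr h)]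
    exact polarisationFactor_sub_of_le hjA0 jB
  · rw [abs_of_neg (sub_neg.mpr h), neg_sub]
    exact polarisationFactor_sub_rev hjA0 jB

theorem stmt_8 (a b : ℕ) (ha : 0 < a) (hb : 0 < b)
    (jA jB : ℝ) (hjA : jA = a / 2) (hjB : jB = b / 2)
    (κ : ℝ → ℝ)
    (hκ : ∀ L : ℝ, κ L = (jA * (jA + 1) + jB * (jB + 1) - L * (L + 1)) / (2 * jA * (jA + 1))) :
    (∀ k : ℕ, k ≤ min a b → κ (|jA - jB| + k) ≤ κ |jA - jB|) ∧
    (jA ≥ jB → κ |jA - jB| = jB / jA) ∧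
    (jA < jB → κ |jA - jB| = (jB + 1) / (jA + 1)) :=
  stmt_8_general a b ha jA jB hjA κ hκ
end

section
/- Let Λ be a finite index set containing a distinguished element 0, let d_λ ≥ 1 be integers with d_0 = 1 and d_λ ≥ 2 for λ ≠ 0, and let (p_λ)_{λ∈Λ} be a probability distribution. Then 1 − ∑_{λ∈Λ} p_λ²/d_λ ≥ (1/2)(1 − p_0)². -/
/-!
Splitting off the trivial block, the weights `p λ` with `λ ≠ 0` sum to `s = 1 - p 0` and have
`d λ ≥ 2`, so their contribution to `∑ p λ ^ 2 / d λ` is at most `s ^ 2 / 2`. What remains is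
`1 - (1 - s) ^ 2 - s ^ 2 / 2 ≥ s ^ 2 / 2`, i.e. `s (1 - s) ≥ 0`.
-/

open Finset

theorem Finset.sum_sq_div_le_sq_sum_div_two {ι : Type*} (s : Finset ι) (p d : ι → ℝ)
    (hp : ∀ i ∈ s, 0 ≤ p i) (hd : ∀ i ∈ s, 2 ≤ d i) :
    ∑ i ∈ s, p i ^ 2 / d i ≤ (∑ i ∈ s, p i) ^ 2 / 2 :=
  calc ∑ i ∈ s, p i ^ 2 / d i
      ≤ ∑ i ∈ s, p i ^ 2 / 2 := sum_le_sum fun i hi => by gcongr; exact hd i hi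
    _ = (∑ i ∈ s, p i ^ 2) / 2 := (sum_div s _ 2).symm
    _ ≤ (∑ i ∈ s, p i) ^ 2 / 2 := by gcongr; exact sum_sq_le_sq_sum_of_nonneg hp

theorem stmt_16_general {ι : Type*} [Fintype ι] (o : ι)
    (d : ι → ℕ) (hd0 : d o = 1) (hd : ∀ lam, lam ≠ o → 2 ≤ d lam)
    (p : ι → ℝ) (hp : ∀ lam, 0 ≤ p lam) (hsum : ∑ lam, p lam = 1) :
    1 - ∑ lam, p lam ^ 2 / d lam ≥ (1 / 2) * (1 - p o) ^ 2 := by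
  classical
  have hsplit := Fintype.sum_eq_add_sum_compl o p
  have hsplit_sq := Fintype.sum_eq_add_sum_compl o fun lam => p lam ^ 2 / d lam
  have hrest := sum_sq_div_le_sq_sum_div_two {o}ᶜ p (fun lam => d lam)
    (fun lam _ => hp lam)
    (fun lam hlam => by exact_mod_cast hd lam (by simpa using hlam))
  have hrest_nonneg : 0 ≤ ∑ lam ∈ {o}ᶜ, p lam := sum_nonneg fun lam _ => hp lam
  simp only [hd0, Nat.cast_one, div_one] at hsplit_sq
  nlinarith [hp o]

theorem stmt_16 {ι : Type*} [Fintype ι] [DecidableEq ι] (o : ι)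
    (d : ι → ℕ) (hd0 : d o = 1) (hd : ∀ lam, lam ≠ o → 2 ≤ d lam)
    (p : ι → ℝ) (hp : ∀ lam, 0 ≤ p lam) (hsum : ∑ lam, p lam = 1) :
    1 - ∑ lam, p lam ^ 2 / d lam ≥ (1 / 2) * (1 - p o) ^ 2 :=
  stmt_16_general o d hd0 hd p hp hsum
end

section
/- Let d ≥ 2 and g be integers with 1 ≤ g ≤ d−1, and let q : Λ → [0, g] ∪ {q_0} be nonnegative reals indexed by a finite set Λ containing 0, with q_λ ≤ g for all λ ≠ 0, q_0 ≤ d, and ∑_λ q_λ = d. Then (∑_λ q_λ² − 1)/(d²−1) ≤ 1 − (2g(d−g)/(d(d²−1)))·(d − q_0). -/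
/-!
Write `s = ∑ q` and `S = ∑ q²`. Splitting off one weight `q i` and bounding the square of the
remaining sum gives `S ≤ q i² + (s - q i)²`; bounding each `q j²` by `M q j` gives `S ≤ M s`
whenever all weights are at most `M`. If all weights are at most `g`, one of these two bounds
(according as some weight reaches `s / 2` or none does) yields `S ≤ g² + (s - g)²`, and this settles
the case `q₀ ≤ g`. Otherwise `q₀ > g` and the first bound with `i = 0` suffices.
-/

open Finset

section

variable {ι : Type*} [Fintype ι] {q : ι → ℝ}

lemma sum_sq_le_sq_add_sq_sum_sub (hq : ∀ j, 0 ≤ q j) (i : ι) :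
    ∑ j, q j ^ 2 ≤ q i ^ 2 + (∑ j, q j - q i) ^ 2 := by
  classical
  have hrest : ∑ j ∈ univ.erase i, q j ^ 2 ≤ (∑ j ∈ univ.erase i, q j) ^ 2 :=
    sum_sq_le_sq_sum_of_nonneg fun j _ => hq j
  rw [← add_sum_erase _ _ (mem_univ i), ← add_sum_erase _ _ (mem_univ i)]
  linarith

lemma sum_sq_le_mul_sum_of_le {M : ℝ} (hq : ∀ j, 0 ≤ q j) (hM : ∀ j, q j ≤ M) :
    ∑ j, q j ^ 2 ≤ M * ∑ j, q j := by
  rw [mul_sum]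
  exact sum_le_sum fun j _ => by nlinarith [hq j, hM j]

lemma sum_sq_le_of_forall_le {g : ℝ} (hq : ∀ j, 0 ≤ q j) (hg : ∀ j, q j ≤ g) :
    ∑ j, q j ^ 2 ≤ g ^ 2 + (∑ j, q j - g) ^ 2 := by
  set s := ∑ j, q j
  by_cases hbig : ∃ i, s / 2 ≤ q i
  · obtain ⟨i, hi⟩ := hbig
    have his : q i ≤ s := single_le_sum (fun j _ => hq j) (mem_univ i)
    -- `x ↦ x² + (s - x)²` is increasing on `[s / 2, ∞)`
    have hmono : q i ^ 2 + (s - q i) ^ 2 ≤ g ^ 2 + (s - g) ^ 2 := by nlinarith [hg i]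
    exact (sum_sq_le_sq_add_sq_sum_sub hq i).trans hmono
  · push Not at hbig
    have hs : 0 ≤ s := sum_nonneg fun j _ => hq j
    have hhalf := sum_sq_le_mul_sum_of_le hq fun j => (hbig j).le
    nlinarith [sq_nonneg (g - s / 2)]

lemma mul_sum_sq_add_le_of_forall_ne_le (o : ι) {g : ℝ} (hg0 : 0 ≤ g) (hgs : g ≤ ∑ j, q j)
    (hq : ∀ j, 0 ≤ q j) (hqg : ∀ j, j ≠ o → q j ≤ g) :
    (∑ j, q j) * ∑ j, q j ^ 2 + 2 * g * (∑ j, q j - g) * (∑ j, q j - q o)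
      ≤ (∑ j, q j) ^ 3 := by
  set s := ∑ j, q j
  have hs : 0 ≤ s := hg0.trans hgs
  have hos : q o ≤ s := single_le_sum (fun j _ => hq j) (mem_univ o)
  have hgap : 0 ≤ g * (s - g) := mul_nonneg hg0 (by linarith)
  rcases le_or_gt (q o) g with hog | hgo
  · have hall : ∀ j, q j ≤ g := fun j => by
      rcases eq_or_ne j o with rfl | hj
      exacts [hog, hqg j hj]
    have hS := mul_le_mul_of_nonneg_left (sum_sq_le_of_forall_le hq hall) hs
    nlinarith [mul_nonneg hgap (hq o)]
  · have hS := mul_le_mul_of_nonneg_left (sum_sq_le_sq_add_sq_sum_sub hq o) hs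
    have hgq : g * (s - g) ≤ s * q o := by nlinarith [sq_nonneg g]
    nlinarith [mul_le_mul_of_nonneg_right hgq (sub_nonneg.mpr hos)]

end

theorem stmt_18_general {ι : Type*} [Fintype ι] (o : ι)
    (d g : ℕ) (hd : 2 ≤ d) (hg2 : g ≤ d - 1)
    (q : ι → ℝ) (hq0 : ∀ lam, 0 ≤ q lam)
    (hqg : ∀ lam, lam ≠ o → q lam ≤ g)
    (hsum : ∑ lam, q lam = d) :
    ((∑ lam, q lam ^ 2) - 1) / ((d : ℝ) ^ 2 - 1)
      ≤ 1 - (2 * g * ((d : ℝ) - g) / (d * ((d : ℝ) ^ 2 - 1))) * ((d : ℝ) - q o) := by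
  have hd' : (2 : ℝ) ≤ d := by exact_mod_cast hd
  have hgd : (g : ℝ) ≤ d := by exact_mod_cast (show g ≤ d by omega)
  have hkey := mul_sum_sq_add_le_of_forall_ne_le o (Nat.cast_nonneg g) (hsum ▸ hgd) hq0 hqg
  rw [hsum] at hkey
  have hdiff : 1 - (2 * g * ((d : ℝ) - g) / (d * ((d : ℝ) ^ 2 - 1))) * ((d : ℝ) - q o)
      - ((∑ lam, q lam ^ 2) - 1) / ((d : ℝ) ^ 2 - 1)
      = ((d : ℝ) ^ 3 - (d * ∑ lam, q lam ^ 2 + 2 * g * ((d : ℝ) - g) * ((d : ℝ) - q o)))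
        / (d * ((d : ℝ) ^ 2 - 1)) := by
    have : (d : ℝ) ^ 2 - 1 ≠ 0 := by nlinarith
    field_simp
    ring
  refine sub_nonneg.mp (hdiff ▸ div_nonneg (by linarith) ?_)
  exact mul_nonneg (by linarith) (by nlinarith)

theorem stmt_18 {ι : Type*} [Fintype ι] [DecidableEq ι] (o : ι)
    (d g : ℕ) (hd : 2 ≤ d) (hg1 : 1 ≤ g) (hg2 : g ≤ d - 1)
    (q : ι → ℝ) (hq0 : ∀ lam, 0 ≤ q lam)
    (hqg : ∀ lam, lam ≠ o → q lam ≤ g) (hq0d : q o ≤ d)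
    (hsum : ∑ lam, q lam = d) :
    ((∑ lam, q lam ^ 2) - 1) / ((d : ℝ) ^ 2 - 1)
      ≤ 1 - (2 * g * ((d : ℝ) - g) / (d * ((d : ℝ) ^ 2 - 1))) * ((d : ℝ) - q o) :=
  stmt_18_general o d g hd hg2 q hq0 hqg hsum
end

section
/- Let P be a d×d stochastic matrix (P_{mn} ≥ 0, ∑_m P_{mn} = 1) and let E_1 ≤ ... ≤ E_d be real numbers with Ẽ := E_d − E_1. Define Δ := (1/(d(d+1)))·[(∑_{m,n} P_{nm}(E_n − E_m))² + ∑_m (∑_n P_{nm}(E_n − E_m))²] and q_0 := ∑_n P_{nn}. Then Δ ≤ (2Ẽ²/(d(d+1)))·(d − q_0)². -/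
/-!
Write `f m = ∑ n, P n m * (E n - E m)` for the energy change out of column `m`. The diagonal term
vanishes and every other gap is at most the spectral width, so `|f m| ≤ Ẽ (1 - P m m)`; these
bounds sum to `Ẽ (d - q₀)`. Both `(∑ f)²` and `∑ f²` are then at most
`(∑ |f|)² ≤ Ẽ² (d - q₀)²`.
-/

open Finset

lemma abs_sum_mul_sub_le {ι : Type*} [Fintype ι] [DecidableEq ι] (p x : ι → ℝ) (w : ℝ)
    (m : ι) (hp : ∀ n, 0 ≤ p n) (hp1 : ∑ n, p n = 1) (hx : ∀ n, |x n - x m| ≤ w) :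
    |∑ n, p n * (x n - x m)| ≤ w * (1 - p m) := by
  have hdiag : ∑ n, p n * (x n - x m) = ∑ n ∈ univ.erase m, p n * (x n - x m) := by
    rw [sum_erase _ (by simp)]
  calc |∑ n, p n * (x n - x m)|
      ≤ ∑ n ∈ univ.erase m, |p n * (x n - x m)| := hdiag ▸ abs_sum_le_sum_abs _ _
    _ ≤ ∑ n ∈ univ.erase m, p n * w := by
        gcongr with n
        rw [abs_mul, abs_of_nonneg (hp n)]
        exact mul_le_mul_of_nonneg_left (hx n) (hp n)
    _ = w * (1 - p m) := by
        rw [← sum_mul, sum_erase_eq_sub (mem_univ m), hp1, mul_comm]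

lemma sq_sum_add_sum_sq_le {ι : Type*} (s : Finset ι) (f g : ι → ℝ)
    (hfg : ∀ i ∈ s, |f i| ≤ g i) :
    (∑ i ∈ s, f i) ^ 2 + ∑ i ∈ s, f i ^ 2 ≤ 2 * (∑ i ∈ s, g i) ^ 2 := by
  have hg : ∀ i ∈ s, 0 ≤ g i := fun i hi => (abs_nonneg _).trans (hfg i hi)
  have habs : |∑ i ∈ s, f i| ≤ ∑ i ∈ s, g i :=
    (abs_sum_le_sum_abs _ _).trans (sum_le_sum hfg)
  have hsq_sum : (∑ i ∈ s, f i) ^ 2 ≤ (∑ i ∈ s, g i) ^ 2 :=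
    sq_le_sq' (abs_le.1 habs).1 (abs_le.1 habs).2
  have hsum_sq : ∑ i ∈ s, f i ^ 2 ≤ (∑ i ∈ s, g i) ^ 2 :=
    calc ∑ i ∈ s, f i ^ 2
        ≤ ∑ i ∈ s, g i ^ 2 := sum_le_sum fun i hi =>
          sq_le_sq' (abs_le.1 (hfg i hi)).1 (abs_le.1 (hfg i hi)).2
      _ ≤ (∑ i ∈ s, g i) ^ 2 := sum_sq_le_sq_sum_of_nonneg hg
  linarith

lemma Fin.abs_sub_le_of_monotone {d : ℕ} (hd : 0 < d) {E : Fin d → ℝ} (hE : Monotone E)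
    (n m : Fin d) : |E n - E m| ≤ E ⟨d - 1, Nat.sub_lt hd Nat.one_pos⟩ - E ⟨0, hd⟩ := by
  have hbot : ∀ k : Fin d, E ⟨0, hd⟩ ≤ E k := fun k =>
    hE (Fin.mk_le_of_le_val (Nat.zero_le _))
  have htop : ∀ k : Fin d, E k ≤ E ⟨d - 1, Nat.sub_lt hd Nat.one_pos⟩ := fun k =>
    hE (Fin.le_def.2 (Nat.le_sub_one_of_lt k.isLt))
  rw [abs_sub_le_iff]
  constructor <;> linarith [hbot n, hbot m, htop n, htop m]

theorem stmt_19 (d : ℕ) (hd : 0 < d)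
    (P : Matrix (Fin d) (Fin d) ℝ)
    (hPpos : ∀ m n, 0 ≤ P m n) (hPstoch : ∀ n, ∑ m, P m n = 1)
    (E : Fin d → ℝ) (hE : Monotone E)
    (Ewidth : ℝ) (hEw : Ewidth = E ⟨d - 1, by omega⟩ - E ⟨0, hd⟩)
    (Δ : ℝ)
    (hΔ : Δ = (1 / (d * (d + 1))) *
      ((∑ m, ∑ n, P n m * (E n - E m)) ^ 2 + ∑ m, (∑ n, P n m * (E n - E m)) ^ 2))
    (q₀ : ℝ) (hq : q₀ = ∑ n, P n n) :
    Δ ≤ (2 * Ewidth ^ 2 / (d * (d + 1))) * ((d : ℝ) - q₀) ^ 2 := by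
  have hcol : ∀ m ∈ univ, |∑ n, P n m * (E n - E m)| ≤ Ewidth * (1 - P m m) := fun m _ =>
    abs_sum_mul_sub_le (P · m) E Ewidth m (hPpos · m) (hPstoch m)
      (fun n => hEw ▸ Fin.abs_sub_le_of_monotone hd hE n m)
  have htotal : ∑ m, Ewidth * (1 - P m m) = Ewidth * ((d : ℝ) - q₀) := by
    simp [← mul_sum, sum_sub_distrib, hq]
  have key := sq_sum_add_sum_sq_le univ _ _ hcol
  rw [htotal] at key
  rw [hΔ, show 2 * Ewidth ^ 2 / (d * (d + 1)) * ((d : ℝ) - q₀) ^ 2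
      = 1 / (d * (d + 1)) * (2 * (Ewidth * ((d : ℝ) - q₀)) ^ 2) by ring]
  gcongr
end
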